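/- arXiv:1701.06960 — 4 statements merged into one kernel-verified Lean document; each statement's English description precedes it below -/
import Mathlib

section
/- Let K ≥ 1 and d ≥ 1 be integers, let c_1,…,c_K be nonnegative reals, and let R_{i,j} ≥ 0 be given for i = 1,…,K and max(1, i−d+1) ≤ j ≤ i. Define r_{ij} = Σ_{k=j}^{i} Σ_{l=k}^{min(k+d−1,K)} R_{l,k} for 1 ≤ j ≤ i ≤ K. If Σ_{j=max(1,i−d+1)}^{i} R_{i,j} ≤ c_i for every i = 1,…,K, then: (a) r_{ij} = Σ_{k=j}^{i} r_{kk} for all 1 ≤ j < i ≤ K; (b) r_{ij} ≤ Σ_{k=j}^{min(i+d−1,K)} c_k for all 1 ≤ j ≤ i ≤ K; and (c) r_{ij} ≥ 0 for all 1 ≤ j ≤ i ≤ K. (Direct part of Proposition 1: the individual-rate constraint system implies the cumulative-rate constraint system.) -/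
open Finset

/-- The cumulative rate `r_{ij}`: everything sent, in any slot, about the sources `j, …, i`. -/
def cumRate (K d : ℕ) (R : ℕ → ℕ → ℝ) (i j : ℕ) : ℝ :=
  ∑ k ∈ Icc j i, ∑ l ∈ Icc k (min (k + d - 1) K), R l k

section CumRate

variable {K d : ℕ} {R : ℕ → ℕ → ℝ}

theorem cumRate_eq_sum_cumRate_self (i j : ℕ) :
    cumRate K d R i j = ∑ k ∈ Icc j i, cumRate K d R k k := by
  simp only [cumRate, Icc_self, sum_singleton]

/-- Exchanging the order of summation: source `k` is served in slot `l` exactly when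
`l + 1 - d ≤ k ≤ l`. -/
theorem cumRate_eq_sum_slots {i j : ℕ} (hj : 1 ≤ j) :
    cumRate K d R i j =
      ∑ l ∈ Icc j (min (i + d - 1) K), ∑ k ∈ Icc (max j (l + 1 - d)) (min i l), R l k :=
  sum_comm' fun k l => by simp only [mem_Icc]; omega

theorem cumRate_nonneg
    (hR : ∀ i j, 1 ≤ i → i ≤ K → max 1 (i + 1 - d) ≤ j → j ≤ i → 0 ≤ R i j)
    {i j : ℕ} (hj : 1 ≤ j) : 0 ≤ cumRate K d R i j :=
  sum_nonneg fun k hk => sum_nonneg fun l hl => by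
    simp only [mem_Icc] at hk hl
    exact hR l k (by omega) (by omega) (by omega) (by omega)

theorem cumRate_le_sum_capacity {c : ℕ → ℝ}
    (hR : ∀ i j, 1 ≤ i → i ≤ K → max 1 (i + 1 - d) ≤ j → j ≤ i → 0 ≤ R i j)
    (hcap : ∀ i, 1 ≤ i → i ≤ K → ∑ j ∈ Icc (max 1 (i + 1 - d)) i, R i j ≤ c i)
    {i j : ℕ} (hj : 1 ≤ j) :
    cumRate K d R i j ≤ ∑ l ∈ Icc j (min (i + d - 1) K), c l := by
  rw [cumRate_eq_sum_slots hj]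
  refine sum_le_sum fun l hl => ?_
  rw [mem_Icc] at hl
  calc ∑ k ∈ Icc (max j (l + 1 - d)) (min i l), R l k
      ≤ ∑ k ∈ Icc (max 1 (l + 1 - d)) l, R l k := by
        refine sum_le_sum_of_subset_of_nonneg ?_ fun k hk _ => ?_
        · exact Icc_subset_Icc (max_le_max_right _ hj) (min_le_right i l)
        · rw [mem_Icc] at hk
          exact hR l k (by omega) (by omega) hk.1 hk.2
    _ ≤ c l := hcap l (by omega) (by omega)

end CumRate

theorem stmt_0_general (K d : ℕ)
    (c : ℕ → ℝ)
    (R : ℕ → ℕ → ℝ)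
    (hR : ∀ i j, 1 ≤ i → i ≤ K → max 1 (i + 1 - d) ≤ j → j ≤ i → 0 ≤ R i j)
    (r : ℕ → ℕ → ℝ)
    (hr : ∀ i j, 1 ≤ j → j ≤ i → i ≤ K →
      r i j = ∑ k ∈ Finset.Icc j i, ∑ l ∈ Finset.Icc k (min (k + d - 1) K), R l k)
    (hcap : ∀ i, 1 ≤ i → i ≤ K →
      ∑ j ∈ Finset.Icc (max 1 (i + 1 - d)) i, R i j ≤ c i) :
    (∀ i j, 1 ≤ j → j < i → i ≤ K → r i j = ∑ k ∈ Finset.Icc j i, r k k) ∧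
    (∀ i j, 1 ≤ j → j ≤ i → i ≤ K →
      r i j ≤ ∑ k ∈ Finset.Icc j (min (i + d - 1) K), c k) ∧
    (∀ i j, 1 ≤ j → j ≤ i → i ≤ K → 0 ≤ r i j) := by
  refine ⟨fun i j hj hji hiK => ?_, fun i j hj hji hiK => ?_, fun i j hj hji hiK => ?_⟩
  · rw [hr i j hj hji.le hiK]
    refine (cumRate_eq_sum_cumRate_self (K := K) (d := d) (R := R) i j).trans
      (sum_congr rfl fun k hk => ?_)
    rw [mem_Icc] at hk
    exact (hr k k (hj.trans hk.1) le_rfl (hk.2.trans hiK)).symm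
  · exact (hr i j hj hji hiK).trans_le (cumRate_le_sum_capacity hR hcap hj)
  · exact (hr i j hj hji hiK).symm ▸ cumRate_nonneg hR hj

/-- Direct part of Proposition 1: the individual-rate constraint system implies
the cumulative-rate constraint system. -/
theorem stmt_0 (K d : ℕ) (hK : 1 ≤ K) (hd : 1 ≤ d)
    (c : ℕ → ℝ) (hc : ∀ i, 1 ≤ i → i ≤ K → 0 ≤ c i)
    (R : ℕ → ℕ → ℝ)
    (hR : ∀ i j, 1 ≤ i → i ≤ K → max 1 (i + 1 - d) ≤ j → j ≤ i → 0 ≤ R i j)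
    (r : ℕ → ℕ → ℝ)
    (hr : ∀ i j, 1 ≤ j → j ≤ i → i ≤ K →
      r i j = ∑ k ∈ Finset.Icc j i, ∑ l ∈ Finset.Icc k (min (k + d - 1) K), R l k)
    (hcap : ∀ i, 1 ≤ i → i ≤ K →
      ∑ j ∈ Finset.Icc (max 1 (i + 1 - d)) i, R i j ≤ c i) :
    (∀ i j, 1 ≤ j → j < i → i ≤ K → r i j = ∑ k ∈ Finset.Icc j i, r k k) ∧
    (∀ i j, 1 ≤ j → j ≤ i → i ≤ K →
      r i j ≤ ∑ k ∈ Finset.Icc j (min (i + d - 1) K), c k) ∧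
    (∀ i j, 1 ≤ j → j ≤ i → i ≤ K → 0 ≤ r i j) :=
  stmt_0_general K d c R hR r hr hcap
end

section
/- Let K ≥ 1 and d ≥ 1 be integers, and let c_1,…,c_K ≥ 0 and r_{11},…,r_{KK} ≥ 0 be reals satisfying the interval constraints Σ_{k=j}^{i} r_{kk} ≤ Σ_{k=j}^{min(i+d−1,K)} c_k for all pairs 1 ≤ j ≤ i ≤ K. Then there exist nonnegative reals R_{i,j}, for i = 1,…,K and max(1, i−d+1) ≤ j ≤ i, such that Σ_{l=i}^{min(i+d−1,K)} R_{l,i} = r_{ii} for every i = 1,…,K and Σ_{j=max(1,i−d+1)}^{i} R_{i,j} ≤ c_i for every i = 1,…,K. (Converse part of Proposition 1: the cumulative-rate constraint system admits a realization by individual rates.) -/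
/-!
Serve the sources first-in-first-out at full capacity. With `D` the cumulative demand and `T` the
cumulative service, `T n = min (D n) (T (n - 1) + c n)`, the interval constraints say exactly that
source `j` is completely served by its deadline `min (j + d - 1) K`, i.e. `D j ≤ T (deadline)`.
Let `R i j` be the length of `[D (j - 1), D j] ∩ [T (i - 1), T i]`, the data of source `j` sent in
slot `i`. Over the slots `j, …, deadline` the pieces `[T (l - 1), T l]` tile an interval containing
`[D (j - 1), D j]`, so they add up to `r j`; over the sources the pieces `[D (j - 1), D j]` do not
overlap, so slot `i` carries at most `T i - T (i - 1) ≤ c i`.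
-/

open Finset

theorem Finset.sum_Icc_sub_pred {G : Type*} [AddCommGroup G] (g : ℕ → G) {m n : ℕ}
    (hm : 1 ≤ m) (hmn : m ≤ n + 1) :
    ∑ l ∈ Icc m n, (g l - g (l - 1)) = g n - g (m - 1) := by
  obtain ⟨k, rfl⟩ := Nat.exists_eq_add_of_le' hm
  rw [← Ico_add_one_right_eq_Icc, ← sum_Ico_add' (fun l => g l - g (l - 1)) k n 1]
  simpa using sum_Ico_sub g (by omega : k ≤ n)

/-- The length of `[a, b] ∩ [s, t]`. -/
def overlapLength (a b s t : ℝ) : ℝ := max 0 (min b t - max a s)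

theorem overlapLength_comm (a b s t : ℝ) : overlapLength a b s t = overlapLength s t a b := by
  simp only [overlapLength, min_comm b t, max_comm a s]

theorem overlapLength_eq_sub_clamp {a b s t : ℝ} (hab : a ≤ b) (hst : s ≤ t) :
    overlapLength a b s t = min (max b s) t - min (max a s) t := by
  simp only [overlapLength, min_def, max_def]
  split_ifs <;> linarith

theorem sum_overlapLength_of_monotone {f : ℕ → ℝ} (hf : Monotone f) {s t : ℝ} (hst : s ≤ t)
    {m n : ℕ} (hm : 1 ≤ m) (hmn : m ≤ n + 1) :
    ∑ l ∈ Icc m n, overlapLength (f (l - 1)) (f l) s t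
      = min (max (f n) s) t - min (max (f (m - 1)) s) t := by
  rw [← sum_Icc_sub_pred (fun x => min (max (f x) s) t) hm hmn]
  exact sum_congr rfl fun l _ => overlapLength_eq_sub_clamp (hf (Nat.sub_le l 1)) hst

def cumDemand (r : ℕ → ℝ) (j : ℕ) : ℝ := ∑ k ∈ Icc 1 j, r k

/-- Cumulative service after slot `n` when the sources are served first-in-first-out at full
capacity. -/
def fifoService (r c : ℕ → ℝ) : ℕ → ℝ
  | 0 => 0
  | n + 1 => min (cumDemand r (n + 1)) (fifoService r c n + c (n + 1))

section Fifo

variable {r c : ℕ → ℝ}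

theorem cumDemand_sub_pred {j : ℕ} (hj : 1 ≤ j) : cumDemand r j - cumDemand r (j - 1) = r j := by
  obtain ⟨k, rfl⟩ := Nat.exists_eq_add_of_le' hj
  simp [cumDemand, sum_Icc_succ_top]

theorem cumDemand_add_sum_Icc {s j : ℕ} (hsj : s ≤ j) :
    cumDemand r j = cumDemand r s + ∑ k ∈ Icc (s + 1) j, r k := by
  simpa [cumDemand, ← Icc_add_one_left_eq_Ioc] using
    (sum_Ioc_consecutive r (Nat.zero_le s) hsj).symm

theorem cumDemand_mono (hr : ∀ k, 0 ≤ r k) : Monotone (cumDemand r) := fun _ _ h =>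
  sum_le_sum_of_subset_of_nonneg (Icc_subset_Icc le_rfl h) fun k _ _ => hr k

theorem fifoService_le_cumDemand : ∀ n, fifoService r c n ≤ cumDemand r n
  | 0 => by simp [fifoService, cumDemand]
  | _ + 1 => min_le_left _ _

theorem fifoService_succ_le (n : ℕ) : fifoService r c (n + 1) ≤ fifoService r c n + c (n + 1) :=
  min_le_right _ _

theorem fifoService_mono (hr : ∀ k, 0 ≤ r k) (hc : ∀ k, 0 ≤ c k) : Monotone (fifoService r c) :=
  monotone_nat_of_le_succ fun n => le_min
    ((fifoService_le_cumDemand n).trans (cumDemand_mono hr n.le_succ))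
    (le_add_of_nonneg_right (hc _))

/-- `fifoService r c t` is the minimum over `s ≤ t` of
`cumDemand r s + ∑ k ∈ Icc (s + 1) t, c k`. -/
theorem le_fifoService {t : ℕ} {x : ℝ}
    (hx : ∀ s ≤ t, x ≤ cumDemand r s + ∑ k ∈ Icc (s + 1) t, c k) : x ≤ fifoService r c t := by
  induction t generalizing x with
  | zero => simpa [cumDemand, fifoService] using hx 0 le_rfl
  | succ n ih =>
    refine le_min (by simpa using hx (n + 1) le_rfl) ?_
    have : x - c (n + 1) ≤ fifoService r c n := ih fun s hs => by
      have := hx s (by omega)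
      rw [sum_Icc_succ_top (by omega)] at this
      linarith
    linarith

theorem cumDemand_le_fifoService (hr : ∀ k, 0 ≤ r k) (hc : ∀ k, 0 ≤ c k) {j e : ℕ}
    (h : ∀ s < j, ∑ k ∈ Icc (s + 1) j, r k ≤ ∑ k ∈ Icc (s + 1) e, c k) :
    cumDemand r j ≤ fifoService r c e := by
  refine le_fifoService fun s _ => ?_
  rcases lt_or_ge s j with hsj | hjs
  · rw [cumDemand_add_sum_Icc hsj.le]
    linarith [h s hsj]
  · exact le_add_of_le_of_nonneg (cumDemand_mono hr hjs) (sum_nonneg fun k _ => hc k)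

end Fifo

theorem exists_rates_of_nonneg (K d : ℕ) {c r : ℕ → ℝ} (hc : ∀ k, 0 ≤ c k) (hr : ∀ k, 0 ≤ r k)
    (hineq : ∀ i j, 1 ≤ j → j ≤ i → i ≤ K →
      ∑ k ∈ Icc j i, r k ≤ ∑ k ∈ Icc j (min (i + d - 1) K), c k) :
    ∃ R : ℕ → ℕ → ℝ,
      (∀ i j, 0 ≤ R i j) ∧
      (∀ i, 1 ≤ i → i ≤ K → ∑ l ∈ Icc i (min (i + d - 1) K), R l i = r i) ∧
      (∀ i, 1 ≤ i → ∑ j ∈ Icc (max 1 (i + 1 - d)) i, R i j ≤ c i) := by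
  set D := cumDemand r
  set T := fifoService r c
  have hD := cumDemand_mono hr
  have hT := fifoService_mono hr hc
  refine ⟨fun i j => overlapLength (D (j - 1)) (D j) (T (i - 1)) (T i),
    fun _ _ => le_max_left _ _, fun i hi hiK => ?_, fun i hi => ?_⟩
  · set e := min (i + d - 1) K
    have hserved : D i ≤ T e := cumDemand_le_fifoService hr hc fun s hs =>
      hineq i (s + 1) (by omega) hs hiK
    simp_rw [overlapLength_comm (D (i - 1))]
    rw [sum_overlapLength_of_monotone hT (hD (Nat.sub_le i 1)) hi (by omega),
      max_eq_left (hD (Nat.sub_le i 1) |>.trans hserved), min_eq_right hserved,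
      max_eq_right (fifoService_le_cumDemand _), min_eq_left (hD (Nat.sub_le i 1)),
      cumDemand_sub_pred hi]
  · have hTi : T (i - 1) ≤ T i := hT (Nat.sub_le i 1)
    rw [sum_overlapLength_of_monotone hD hTi (le_max_left _ _) (by omega)]
    have hcap : T i ≤ T (i - 1) + c i := by
      obtain ⟨n, rfl⟩ := Nat.exists_eq_add_of_le' hi
      exact fifoService_succ_le n
    linarith [min_le_right (max (D i) (T (i - 1))) (T i),
      le_min (le_max_right (D (max 1 (i + 1 - d) - 1)) (T (i - 1))) hTi]

theorem stmt_1_general (K d : ℕ)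
    (c : ℕ → ℝ) (hc : ∀ i, 1 ≤ i → i ≤ K → 0 ≤ c i)
    (rdiag : ℕ → ℝ) (hrdiag : ∀ i, 1 ≤ i → i ≤ K → 0 ≤ rdiag i)
    (hineq : ∀ i j, 1 ≤ j → j ≤ i → i ≤ K →
      ∑ k ∈ Finset.Icc j i, rdiag k ≤ ∑ k ∈ Finset.Icc j (min (i + d - 1) K), c k) :
    ∃ R : ℕ → ℕ → ℝ,
      (∀ i j, 1 ≤ i → i ≤ K → max 1 (i + 1 - d) ≤ j → j ≤ i → 0 ≤ R i j) ∧
      (∀ i, 1 ≤ i → i ≤ K →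
        ∑ l ∈ Finset.Icc i (min (i + d - 1) K), R l i = rdiag i) ∧
      (∀ i, 1 ≤ i → i ≤ K →
        ∑ j ∈ Finset.Icc (max 1 (i + 1 - d)) i, R i j ≤ c i) := by
  -- Only the values on slots `1, …, K` matter, so extend both sequences by zero.
  set slots := Set.Icc 1 K
  have on_slots {f : ℕ → ℝ} {k : ℕ} (h1 : 1 ≤ k) (hK : k ≤ K) : slots.indicator f k = f k :=
    Set.indicator_of_mem (show k ∈ slots from ⟨h1, hK⟩) f
  have sum_on_slots {f : ℕ → ℝ} {j i : ℕ} (hj : 1 ≤ j) (hi : i ≤ K) :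
      ∑ k ∈ Icc j i, slots.indicator f k = ∑ k ∈ Icc j i, f k :=
    sum_congr rfl fun k hk => on_slots (hj.trans (mem_Icc.1 hk).1) ((mem_Icc.1 hk).2.trans hi)
  obtain ⟨R, hR, hsource, hslot⟩ := exists_rates_of_nonneg K d (c := slots.indicator c)
    (r := slots.indicator rdiag)
    (fun k => Set.indicator_nonneg (fun k hk => hc k hk.1 hk.2) k)
    (fun k => Set.indicator_nonneg (fun k hk => hrdiag k hk.1 hk.2) k)
    (fun i j hj hji hiK => by
      rw [sum_on_slots hj hiK, sum_on_slots hj (min_le_right _ _)]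
      exact hineq i j hj hji hiK)
  refine ⟨R, fun i j _ _ _ _ => hR i j, fun i hi hiK => ?_, fun i hi hiK => ?_⟩
  · rw [hsource i hi hiK, on_slots hi hiK]
  · exact on_slots (f := c) hi hiK ▸ hslot i hi

/-- Converse part of Proposition 1: the cumulative-rate constraint system admits
a realization by individual rates. -/
theorem stmt_1 (K d : ℕ) (hK : 1 ≤ K) (hd : 1 ≤ d)
    (c : ℕ → ℝ) (hc : ∀ i, 1 ≤ i → i ≤ K → 0 ≤ c i)
    (rdiag : ℕ → ℝ) (hrdiag : ∀ i, 1 ≤ i → i ≤ K → 0 ≤ rdiag i)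
    (hineq : ∀ i j, 1 ≤ j → j ≤ i → i ≤ K →
      ∑ k ∈ Finset.Icc j i, rdiag k ≤ ∑ k ∈ Finset.Icc j (min (i + d - 1) K), c k) :
    ∃ R : ℕ → ℕ → ℝ,
      (∀ i j, 1 ≤ i → i ≤ K → max 1 (i + 1 - d) ≤ j → j ≤ i → 0 ≤ R i j) ∧
      (∀ i, 1 ≤ i → i ≤ K →
        ∑ l ∈ Finset.Icc i (min (i + d - 1) K), R l i = rdiag i) ∧
      (∀ i, 1 ≤ i → i ≤ K →
        ∑ j ∈ Finset.Icc (max 1 (i + 1 - d)) i, R i j ≤ c i) :=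
  stmt_1_general K d c hc rdiag hrdiag hineq
end

section
/- Let K ≥ 1 and d ≥ 1 be integers, and let c_1,…,c_K ≥ 0 and r_{11},…,r_{KK} ≥ 0 be reals satisfying the interval constraints Σ_{k=j}^{i} r_{kk} ≤ Σ_{k=j}^{min(i+d−1,K)} c_k for all pairs 1 ≤ j ≤ i ≤ K, together with the total-balance condition Σ_{i=1}^{K} r_{ii} = Σ_{i=1}^{K} c_i. Then there exist nonnegative reals R_{i,j}, for i = 1,…,K and max(1, i−d+1) ≤ j ≤ i, such that Σ_{l=i}^{min(i+d−1,K)} R_{l,i} = r_{ii} for every i = 1,…,K and (with equality in every capacity constraint) Σ_{j=max(1,i−d+1)}^{i} R_{i,j} = c_i for every i = 1,…,K. (Feasibility of the equality system used in the Farkas-lemma argument of the proof of Proposition 1.) -/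
open Finset

/-!
Lay the demands `rdiag j` end to end as the intervals `[S (j-1), S j]`, and the capacities `c l`
as the intervals `[C (l-1), C l]`, where `S`, `C` are the prefix sums; both tile `[0, S K] =
[0, C K]`. Take `R l j` to be the length of the overlap of the `l`-th capacity interval with the
`j`-th demand interval. Every row and column of `R` then sums to the length of its own interval,
provided each demand interval `j` lies in the capacity intervals `j, …, min (j+d-1) K` and each
capacity interval `l` in the demand intervals `l+1-d, …, l`. These containments are
`S j ≤ C (min (j+d-1) K)` (the constraint for `[1, j]`), `C (j-1) ≤ S (j-1)` (the constraint for
`[j, K]` and the balance condition) and `S (l-d) ≤ C (l-1)` (the constraint for `[1, l-d]`).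
-/

theorem Finset.sum_Icc_sub_pred_s2 (f : ℕ → ℝ) {m n : ℕ} (h : m ≤ n) :
    ∑ i ∈ Icc m n, (f i - f (i - 1)) = f n - f (m - 1) := by
  simpa using Finset.sum_Icc_sub h (fun i => f (i - 1))

noncomputable def prefixSum (f : ℕ → ℝ) (n : ℕ) : ℝ := ∑ k ∈ Icc 1 n, f k

section prefixSum

variable {f : ℕ → ℝ} {m n : ℕ}

@[simp]
theorem prefixSum_zero : prefixSum f 0 = 0 := by
  simp [prefixSum]

theorem prefixSum_sub_prefixSum (h : m ≤ n) :
    prefixSum f n - prefixSum f m = ∑ k ∈ Icc (m + 1) n, f k := by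
  have := Finset.sum_Ioc_consecutive f (Nat.zero_le m) h
  simp only [← Finset.Icc_add_one_left_eq_Ioc, zero_add] at this
  unfold prefixSum
  linarith

theorem prefixSum_sub_pred (hn : 1 ≤ n) : prefixSum f n - prefixSum f (n - 1) = f n := by
  rw [prefixSum_sub_prefixSum (Nat.sub_le n 1), Nat.sub_add_cancel hn, Icc_self, sum_singleton]

theorem prefixSum_mono {K : ℕ} (hf : ∀ k, 1 ≤ k → k ≤ K → 0 ≤ f k) (h : m ≤ n) (hn : n ≤ K) :
    prefixSum f m ≤ prefixSum f n := by
  have : 0 ≤ ∑ k ∈ Icc (m + 1) n, f k :=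
    sum_nonneg fun k hk => hf k (by grind) (by grind)
  linarith [prefixSum_sub_prefixSum (f := f) h]

end prefixSum

/-- When `l ↦ C l` and `j ↦ S j` are monotone, `cornerFlow C S l j` is the length of
`[C (l-1), C l] ∩ [S (j-1), S j]`. -/
noncomputable def cornerFlow (C S : ℕ → ℝ) (l j : ℕ) : ℝ :=
  (min (C l) (S j) - min (C (l - 1)) (S j)) - (min (C l) (S (j - 1)) - min (C (l - 1)) (S (j - 1)))

section cornerFlow

variable {C S : ℕ → ℝ} {l j m n : ℕ}

theorem cornerFlow_comm : cornerFlow C S l j = cornerFlow S C j l := by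
  simp only [cornerFlow, min_comm (C _)]
  ring

theorem cornerFlow_nonneg (hC : C (l - 1) ≤ C l) (hS : S (j - 1) ≤ S j) :
    0 ≤ cornerFlow C S l j := by
  simp only [cornerFlow, min_def]
  split_ifs <;> linarith

theorem sum_Icc_cornerFlow_fst (hmn : m ≤ n) (hS : S (j - 1) ≤ S j) (hjn : S j ≤ C n)
    (hmj : C (m - 1) ≤ S (j - 1)) :
    ∑ l ∈ Icc m n, cornerFlow C S l j = S j - S (j - 1) := by
  set f : ℕ → ℝ := fun l => min (C l) (S j) - min (C l) (S (j - 1))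
  have hterm : ∀ l, cornerFlow C S l j = f l - f (l - 1) := fun l => by
    simp only [f, cornerFlow]; ring
  simp only [hterm, Finset.sum_Icc_sub_pred_s2 f hmn, f]
  rw [min_eq_right hjn, min_eq_right (hS.trans hjn), min_eq_left (hmj.trans hS), min_eq_left hmj]
  ring

theorem sum_Icc_cornerFlow_snd (hmn : m ≤ n) (hC : C (l - 1) ≤ C l) (hln : C l ≤ S n)
    (hml : S (m - 1) ≤ C (l - 1)) :
    ∑ j ∈ Icc m n, cornerFlow C S l j = C l - C (l - 1) := by
  simp only [cornerFlow_comm (C := C)]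
  exact sum_Icc_cornerFlow_fst hmn hC hln hml

end cornerFlow

section constraints

variable {K d : ℕ} {c rdiag : ℕ → ℝ}

theorem prefixSum_le_of_balanced (hd : 1 ≤ d)
    (hineq : ∀ i j, 1 ≤ j → j ≤ i → i ≤ K →
      ∑ k ∈ Finset.Icc j i, rdiag k ≤ ∑ k ∈ Finset.Icc j (min (i + d - 1) K), c k)
    (hbal : ∑ i ∈ Finset.Icc 1 K, rdiag i = ∑ i ∈ Finset.Icc 1 K, c i) {j : ℕ} (hj : j ≤ K) :
    prefixSum c j ≤ prefixSum rdiag j := by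
  rcases hj.eq_or_lt with rfl | hjK
  · exact hbal.ge
  have htail := hineq K (j + 1) (Nat.le_add_left 1 j) hjK le_rfl
  rw [min_eq_right (by omega)] at htail
  have hS := prefixSum_sub_prefixSum (f := rdiag) hj
  have hC := prefixSum_sub_prefixSum (f := c) hj
  unfold prefixSum at hS hC ⊢
  linarith

theorem prefixSum_before_window_le
    (hineq : ∀ i j, 1 ≤ j → j ≤ i → i ≤ K →
      ∑ k ∈ Finset.Icc j i, rdiag k ≤ ∑ k ∈ Finset.Icc j (min (i + d - 1) K), c k)
    (hc : ∀ i, 1 ≤ i → i ≤ K → 0 ≤ c i) {l : ℕ} (hlK : l ≤ K) :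
    prefixSum rdiag (max 1 (l + 1 - d) - 1) ≤ prefixSum c (l - 1) := by
  rcases le_or_gt l d with hld | hdl
  · rw [show max 1 (l + 1 - d) - 1 = 0 by omega, prefixSum_zero]
    simpa using prefixSum_mono hc (Nat.zero_le _) (by omega : l - 1 ≤ K)
  · have h := hineq (l - d) 1 le_rfl (by omega) (by omega)
    rwa [show min (l - d + d - 1) K = l - 1 by omega, ← show max 1 (l + 1 - d) - 1 = l - d by omega]
      at h

end constraints

theorem stmt_2_general (K d : ℕ) (hd : 1 ≤ d)
    (c : ℕ → ℝ) (hc : ∀ i, 1 ≤ i → i ≤ K → 0 ≤ c i)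
    (rdiag : ℕ → ℝ) (hrdiag : ∀ i, 1 ≤ i → i ≤ K → 0 ≤ rdiag i)
    (hineq : ∀ i j, 1 ≤ j → j ≤ i → i ≤ K →
      ∑ k ∈ Finset.Icc j i, rdiag k ≤ ∑ k ∈ Finset.Icc j (min (i + d - 1) K), c k)
    (hbal : ∑ i ∈ Finset.Icc 1 K, rdiag i = ∑ i ∈ Finset.Icc 1 K, c i) :
    ∃ R : ℕ → ℕ → ℝ,
      (∀ i j, 1 ≤ i → i ≤ K → max 1 (i + 1 - d) ≤ j → j ≤ i → 0 ≤ R i j) ∧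
      (∀ i, 1 ≤ i → i ≤ K →
        ∑ l ∈ Finset.Icc i (min (i + d - 1) K), R l i = rdiag i) ∧
      (∀ i, 1 ≤ i → i ≤ K →
        ∑ j ∈ Finset.Icc (max 1 (i + 1 - d)) i, R i j = c i) := by
  refine ⟨cornerFlow (prefixSum c) (prefixSum rdiag), ?_, ?_, ?_⟩
  · intro l j _ hlK _ hj
    exact cornerFlow_nonneg (prefixSum_mono hc (Nat.sub_le l 1) hlK)
      (prefixSum_mono hrdiag (Nat.sub_le j 1) (hj.trans hlK))
  · intro j hj hjK
    rw [sum_Icc_cornerFlow_fst (by omega) (prefixSum_mono hrdiag (Nat.sub_le j 1) hjK)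
      (hineq j 1 le_rfl hj hjK) (prefixSum_le_of_balanced hd hineq hbal (by omega)),
      prefixSum_sub_pred hj]
  · intro l hl hlK
    rw [sum_Icc_cornerFlow_snd (by omega) (prefixSum_mono hc (Nat.sub_le l 1) hlK)
      (prefixSum_le_of_balanced hd hineq hbal hlK) (prefixSum_before_window_le hineq hc hlK),
      prefixSum_sub_pred hl]

/-- Feasibility of the equality system used in the Farkas-lemma argument of the
proof of Proposition 1. -/
theorem stmt_2 (K d : ℕ) (hK : 1 ≤ K) (hd : 1 ≤ d)
    (c : ℕ → ℝ) (hc : ∀ i, 1 ≤ i → i ≤ K → 0 ≤ c i)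
    (rdiag : ℕ → ℝ) (hrdiag : ∀ i, 1 ≤ i → i ≤ K → 0 ≤ rdiag i)
    (hineq : ∀ i j, 1 ≤ j → j ≤ i → i ≤ K →
      ∑ k ∈ Finset.Icc j i, rdiag k ≤ ∑ k ∈ Finset.Icc j (min (i + d - 1) K), c k)
    (hbal : ∑ i ∈ Finset.Icc 1 K, rdiag i = ∑ i ∈ Finset.Icc 1 K, c i) :
    ∃ R : ℕ → ℕ → ℝ,
      (∀ i j, 1 ≤ i → i ≤ K → max 1 (i + 1 - d) ≤ j → j ≤ i → 0 ≤ R i j) ∧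
      (∀ i, 1 ≤ i → i ≤ K →
        ∑ l ∈ Finset.Icc i (min (i + d - 1) K), R l i = rdiag i) ∧
      (∀ i, 1 ≤ i → i ≤ K →
        ∑ j ∈ Finset.Icc (max 1 (i + 1 - d)) i, R i j = c i) :=
  stmt_2_general K d hd c hc rdiag hrdiag hineq hbal
end

section
/- Let K ≥ 1, d ≥ 1, σ² > 0, ρ ∈ [0,1), let h_1,…,h_K be nonzero real channel gains, and let E_1,…,E_K ≥ 0 with E_1 > 0. Consider the delay-tolerant problem (38): minimize f(r) = (σ²/K) Σ_{i=1}^{K} ( (1−ρ) Σ_{j=2}^{i} ρ^{i−j} e^{−r_{ij}} + ρ^{i−1} e^{−r_{i1}} ) over (p, r) subject to r_{ij} = Σ_{k=j}^{i} r_{kk} for 1 ≤ j < i ≤ K, r_{ij} ≤ Σ_{k=j}^{min(i+d−1,K)} log(1+|h_k|² p_k) for 1 ≤ j ≤ i ≤ K, Σ_{j=1}^{i} p_j ≤ Σ_{j=1}^{i} E_j for all i, p_i ≥ 0 and r_{ij} ≥ 0. Then every global minimizer (p*, r*) satisfies the sum-capacity tightness Σ_{i=1}^{K} r*_{ii} =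 Σ_{i=1}^{K} log(1 + |h_i|² p*_i). (Claim used in the converse part of the proof of Proposition 1: since the objective is nonincreasing in every r_{ij}, the optimal solution exhausts the total channel capacity.) -/
/-
The objective is nonincreasing in every rate and strictly decreasing when all rates `r t j`,
`j ≤ t`, of one slot `t` increase. So if a minimizer left capacity unused, it suffices to find a
slot `t` with slack in every capacity constraint whose window `[j, i]` contains it: raising all
those rates by the smallest slack stays feasible and lowers the distortion. Such a slot exists,
for if every slot were covered by a tight window, chaining tight windows from the last slot back
to the first would show that the total rate already equals the total capacity.
-/

open Finset Real

/-- Feasibility for the delay-tolerant problem (38). -/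
def FeasibleDT (K d : ℕ) (h E : ℕ → ℝ) (p : ℕ → ℝ) (r : ℕ → ℕ → ℝ) : Prop :=
  (∀ i j, 1 ≤ j → j < i → i ≤ K → r i j = ∑ k ∈ Finset.Icc j i, r k k) ∧
  (∀ i j, 1 ≤ j → j ≤ i → i ≤ K →
    r i j ≤ ∑ k ∈ Finset.Icc j (min (i + d - 1) K), Real.log (1 + (h k) ^ 2 * p k)) ∧
  (∀ i, 1 ≤ i → i ≤ K →
    ∑ j ∈ Finset.Icc 1 i, p j ≤ ∑ j ∈ Finset.Icc 1 i, E j) ∧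
  (∀ i, 1 ≤ i → i ≤ K → 0 ≤ p i) ∧
  (∀ i j, 1 ≤ j → j ≤ i → i ≤ K → 0 ≤ r i j)

/-- The average-distortion objective of problem (38). -/
noncomputable def avgDistDT (K : ℕ) (σ2 ρ : ℝ) (r : ℕ → ℕ → ℝ) : ℝ :=
  (σ2 / K) * ∑ i ∈ Finset.Icc 1 K,
    ((1 - ρ) * ∑ j ∈ Finset.Icc 2 i, ρ ^ (i - j) * Real.exp (-r i j)
      + ρ ^ (i - 1) * Real.exp (-r i 1))

/-- `u i - v j` plays the role of the slack of the capacity constraint on the window `[j, i]`. -/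
theorem exists_le_of_tight_cover {α : Type*} [Preorder α] {K : ℕ} {u v : ℕ → α}
    (hle : ∀ i j, 1 ≤ j → j ≤ i + 1 → 1 ≤ i → i ≤ K → v j ≤ u i)
    (htight : ∀ t, 1 ≤ t → t ≤ K → ∃ i j, 1 ≤ j ∧ j ≤ t ∧ t ≤ i ∧ i ≤ K ∧ u i ≤ v j) :
    ∀ t, 1 ≤ t → t ≤ K → ∃ i, t ≤ i ∧ i ≤ K ∧ u i ≤ v 1 := by
  intro t
  induction t using Nat.strong_induction_on with
  | _ t ih =>
    intro ht1 htK
    obtain ⟨i, j, hj1, hjt, hti, hiK, hij⟩ := htight t ht1 htK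
    rcases eq_or_lt_of_le hj1 with rfl | hj2
    · exact ⟨i, hti, hiK, hij⟩
    obtain ⟨i', hji', hi'K, hi'⟩ := ih (j - 1) (by omega) (by omega) (by omega)
    by_cases hii' : i ≤ i'
    · exact ⟨i', hti.trans hii', hi'K, hi'⟩
    · exact ⟨i, hti, hiK, hij.trans ((hle i' j (by omega) (by omega) (by omega) hi'K).trans hi')⟩

theorem sum_Icc_eq_sub_sum_range {G : Type*} [AddCommGroup G] (f : ℕ → G) {j n : ℕ}
    (h : j ≤ n + 1) : ∑ k ∈ Icc j n, f k = ∑ k ∈ range (n + 1), f k - ∑ k ∈ range j, f k := by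
  rw [← Ico_add_one_right_eq_Icc, sum_Ico_eq_sub _ h]

theorem exists_slack_slot {K : ℕ} {a c : ℕ → ℝ} {m : ℕ → ℕ}
    (hm : ∀ i, 1 ≤ i → i ≤ K → i ≤ m i ∧ m i ≤ K) (hc : ∀ k, 1 ≤ k → k ≤ K → 0 ≤ c k)
    (hcap : ∀ i j, 1 ≤ j → j ≤ i → i ≤ K → ∑ k ∈ Icc j i, a k ≤ ∑ k ∈ Icc j (m i), c k)
    (hlt : ∑ k ∈ Icc 1 K, a k < ∑ k ∈ Icc 1 K, c k) :
    ∃ t, 1 ≤ t ∧ t ≤ K ∧ ∀ i j, 1 ≤ j → j ≤ t → t ≤ i → i ≤ K →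
      ∑ k ∈ Icc j i, a k < ∑ k ∈ Icc j (m i), c k := by
  have hK : 1 ≤ K := by
    by_contra hK
    simp [Icc_eq_empty_of_lt (show K < 1 by omega)] at hlt
  by_contra! htight
  -- in prefix sums, the window constraint on `[j, i]` reads `v j ≤ u i`
  set u : ℕ → ℝ := fun i => ∑ k ∈ range (m i + 1), c k - ∑ k ∈ range (i + 1), a k
  set v : ℕ → ℝ := fun j => ∑ k ∈ range j, c k - ∑ k ∈ range j, a k
  have hle : ∀ i j, 1 ≤ j → j ≤ i + 1 → 1 ≤ i → i ≤ K → v j ≤ u i := by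
    intro i j hj hji hi hiK
    obtain ⟨him, hmK⟩ := hm i hi hiK
    rcases eq_or_lt_of_le hji with rfl | hji
    · have : 0 ≤ ∑ k ∈ Icc (i + 1) (m i), c k :=
        sum_nonneg fun k hk => hc k (by simp at hk; omega) (by simp at hk; omega)
      rw [sum_Icc_eq_sub_sum_range _ (by omega)] at this
      simp only [u, v]
      linarith
    · have := hcap i j hj (by omega) hiK
      rw [sum_Icc_eq_sub_sum_range _ (by omega), sum_Icc_eq_sub_sum_range _ (by omega)] at this
      simp only [u, v]
      linarith
  have htight' : ∀ t, 1 ≤ t → t ≤ K → ∃ i j, 1 ≤ j ∧ j ≤ t ∧ t ≤ i ∧ i ≤ K ∧ u i ≤ v j := by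
    intro t ht1 htK
    obtain ⟨i, j, hj, hjt, hti, hiK, hij⟩ := htight t ht1 htK
    refine ⟨i, j, hj, hjt, hti, hiK, ?_⟩
    have him := (hm i (by omega) hiK).1
    rw [sum_Icc_eq_sub_sum_range _ (by omega), sum_Icc_eq_sub_sum_range _ (by omega)] at hij
    simp only [u, v]
    linarith
  obtain ⟨i, hKi, hiK, hi⟩ := exists_le_of_tight_cover hle htight' K hK le_rfl
  obtain rfl : i = K := le_antisymm hiK hKi
  have hmK : m i = i := le_antisymm (hm i hK le_rfl).2 (hm i hK le_rfl).1
  rw [sum_Icc_eq_sub_sum_range _ (by omega), sum_Icc_eq_sub_sum_range _ (by omega)] at hlt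
  simp only [u, v, hmK] at hi
  linarith

theorem Finset.exists_pos_forall_le {ι : Type*} (s : Finset ι) {f : ι → ℝ}
    (hf : ∀ x ∈ s, 0 < f x) : ∃ ε > 0, ∀ x ∈ s, ε ≤ f x := by
  rcases s.eq_empty_or_nonempty with rfl | hs
  · exact ⟨1, one_pos, by simp⟩
  · obtain ⟨x₀, hx₀, hmin⟩ := s.exists_min_image f hs
    exact ⟨f x₀, hf x₀ hx₀, hmin⟩

theorem FeasibleDT.eq_sum_diag {K d : ℕ} {h E p : ℕ → ℝ} {r : ℕ → ℕ → ℝ}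
    (hf : FeasibleDT K d h E p r) {i j : ℕ} (hj : 1 ≤ j) (hji : j ≤ i) (hiK : i ≤ K) :
    r i j = ∑ k ∈ Icc j i, r k k := by
  rcases eq_or_lt_of_le hji with rfl | hlt
  · rw [Icc_self, sum_singleton]
  · exact hf.1 i j hj hlt hiK

theorem FeasibleDT.log_capacity_nonneg {K d : ℕ} {h E p : ℕ → ℝ} {r : ℕ → ℕ → ℝ}
    (hf : FeasibleDT K d h E p r) {k : ℕ} (hk : 1 ≤ k) (hkK : k ≤ K) :
    0 ≤ Real.log (1 + h k ^ 2 * p k) :=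
  Real.log_nonneg (le_add_of_nonneg_right (mul_nonneg (sq_nonneg _) (hf.2.2.2.1 k hk hkK)))

def raiseSlot (r : ℕ → ℕ → ℝ) (t : ℕ) (ε : ℝ) (i j : ℕ) : ℝ :=
  r i j + if j ≤ t ∧ t ≤ i then ε else 0

theorem FeasibleDT.raiseSlot {K d : ℕ} {h E p : ℕ → ℝ} {r : ℕ → ℕ → ℝ}
    (hf : FeasibleDT K d h E p r) {t : ℕ} {ε : ℝ} (hε : 0 ≤ ε)
    (hslack : ∀ i j, 1 ≤ j → j ≤ t → t ≤ i → i ≤ K →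
      r i j + ε ≤ ∑ k ∈ Icc j (min (i + d - 1) K), Real.log (1 + h k ^ 2 * p k)) :
    FeasibleDT K d h E p (raiseSlot r t ε) := by
  obtain ⟨hdiag, hcap, hpow, hp, hr⟩ := hf
  refine ⟨fun i j hj hji hiK => ?_, fun i j hj hji hiK => ?_, hpow, hp,
    fun i j hj hji hiK => add_nonneg (hr i j hj hji hiK) (by split_ifs <;> simp [hε])⟩
  · have hdiag' : ∀ k, (if k ≤ t ∧ t ≤ k then ε else 0) = if t = k then ε else 0 := fun k => by
      simp only [← le_antisymm_iff, eq_comm]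
    simp only [_root_.raiseSlot, sum_add_distrib, hdiag', sum_ite_eq, mem_Icc, hdiag i j hj hji hiK]
  · unfold _root_.raiseSlot
    split_ifs with hcov
    · exact hslack i j hj hcov.1 hcov.2 hiK
    · simpa using hcap i j hj hji hiK

noncomputable def distortionRow (ρ : ℝ) (r : ℕ → ℕ → ℝ) (i : ℕ) : ℝ :=
  (1 - ρ) * ∑ j ∈ Icc 2 i, ρ ^ (i - j) * Real.exp (-r i j) + ρ ^ (i - 1) * Real.exp (-r i 1)

theorem avgDistDT_eq (K : ℕ) (σ2 ρ : ℝ) (r : ℕ → ℕ → ℝ) :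
    avgDistDT K σ2 ρ r = σ2 / K * ∑ i ∈ Icc 1 K, distortionRow ρ r i :=
  rfl

theorem distortionRow_le {ρ : ℝ} (hρ0 : 0 ≤ ρ) (hρ1 : ρ ≤ 1) {r r' : ℕ → ℕ → ℝ} {i : ℕ}
    (hi : 1 ≤ i) (hr : ∀ j, 1 ≤ j → j ≤ i → r i j ≤ r' i j) :
    distortionRow ρ r' i ≤ distortionRow ρ r i := by
  have hsum : ∑ j ∈ Icc 2 i, ρ ^ (i - j) * Real.exp (-r' i j)
      ≤ ∑ j ∈ Icc 2 i, ρ ^ (i - j) * Real.exp (-r i j) :=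
    sum_le_sum fun j hj => by
      have := hr j (by simp at hj; omega) (by simp at hj; omega)
      gcongr
  have hfirst := hr 1 le_rfl hi
  unfold distortionRow
  gcongr

theorem distortionRow_lt {ρ : ℝ} (hρ0 : 0 ≤ ρ) (hρ1 : ρ < 1) {r r' : ℕ → ℕ → ℝ} {i : ℕ}
    (hi : 1 ≤ i) (hr : ∀ j, 1 ≤ j → j ≤ i → r i j < r' i j) :
    distortionRow ρ r' i < distortionRow ρ r i := by
  unfold distortionRow
  rcases eq_or_lt_of_le hi with rfl | hi2
  · simpa using hr 1 le_rfl le_rfl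
  · have hsum : ∑ j ∈ Icc 2 i, ρ ^ (i - j) * Real.exp (-r' i j)
        < ∑ j ∈ Icc 2 i, ρ ^ (i - j) * Real.exp (-r i j) := by
      refine sum_lt_sum (fun j hj => ?_) ⟨i, by simp; omega, by simpa using hr i hi le_rfl⟩
      have := hr j (by simp at hj; omega) (by simp at hj; omega)
      gcongr
    have hfirst := hr 1 le_rfl hi
    refine add_lt_add_of_lt_of_le (mul_lt_mul_of_pos_left hsum (by linarith)) ?_
    gcongr

theorem avgDistDT_raiseSlot_lt {K : ℕ} {σ2 ρ : ℝ} (hσ : 0 < σ2) (hρ0 : 0 ≤ ρ) (hρ1 : ρ < 1)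
    (r : ℕ → ℕ → ℝ) {t : ℕ} (ht : 1 ≤ t) (htK : t ≤ K) {ε : ℝ} (hε : 0 < ε) :
    avgDistDT K σ2 ρ (raiseSlot r t ε) < avgDistDT K σ2 ρ r := by
  have hK : (0 : ℝ) < K := Nat.cast_pos.mpr (by omega)
  rw [avgDistDT_eq, avgDistDT_eq]
  gcongr ?_ * ?_
  refine sum_lt_sum (fun i hi => distortionRow_le hρ0 hρ1.le (by simp at hi; omega)
    fun j _ _ => ?_) ⟨t, by simp; omega, distortionRow_lt hρ0 hρ1 ht fun j _ hjt => ?_⟩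
  · unfold raiseSlot; split_ifs <;> linarith
  · simpa [raiseSlot, hjt] using hε

theorem stmt_16_general (K d : ℕ) (hK : 1 ≤ K) (hd : 1 ≤ d)
    (σ2 ρ : ℝ) (hσ : 0 < σ2) (hρ0 : 0 ≤ ρ) (hρ1 : ρ < 1)
    (h : ℕ → ℝ) (E : ℕ → ℝ)
    (pstar : ℕ → ℝ) (rstar : ℕ → ℕ → ℝ)
    (hfeas : FeasibleDT K d h E pstar rstar)
    (hmin : ∀ (p : ℕ → ℝ) (r : ℕ → ℕ → ℝ), FeasibleDT K d h E p r →
      avgDistDT K σ2 ρ rstar ≤ avgDistDT K σ2 ρ r) :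
    ∑ i ∈ Finset.Icc 1 K, rstar i i
      = ∑ i ∈ Finset.Icc 1 K, Real.log (1 + (h i) ^ 2 * pstar i) := by
  have hwindow : ∀ i j, 1 ≤ j → j ≤ i → i ≤ K → ∑ k ∈ Icc j i, rstar k k
      ≤ ∑ k ∈ Icc j (min (i + d - 1) K), Real.log (1 + h k ^ 2 * pstar k) :=
    fun i j hj hji hiK => hfeas.eq_sum_diag hj hji hiK ▸ hfeas.2.1 i j hj hji hiK
  have hwhole := hwindow K 1 le_rfl hK le_rfl
  rw [show min (K + d - 1) K = K by omega] at hwhole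
  refine le_antisymm hwhole (not_lt.mp fun hlt => ?_)
  obtain ⟨t, ht, htK, hslack⟩ := exists_slack_slot (m := fun i => min (i + d - 1) K)
    (fun i _ _ => by omega) (fun k => hfeas.log_capacity_nonneg) hwindow hlt
  obtain ⟨ε, hε, hεle⟩ := (Icc t K ×ˢ Icc 1 t).exists_pos_forall_le
    (f := fun q => ∑ k ∈ Icc q.2 (min (q.1 + d - 1) K), Real.log (1 + h k ^ 2 * pstar k)
      - ∑ k ∈ Icc q.2 q.1, rstar k k)
    fun q hq => by
      simp only [mem_product, mem_Icc] at hq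
      linarith [hslack q.1 q.2 (by omega) (by omega) (by omega) (by omega)]
  have hraised := hfeas.raiseSlot (t := t) hε.le fun i j hj hjt hti hiK => by
    have := hεle (i, j) (by simp only [mem_product, mem_Icc]; omega)
    rw [hfeas.eq_sum_diag hj (hjt.trans hti) hiK]
    linarith
  exact (hmin _ _ hraised).not_gt (avgDistDT_raiseSlot_lt hσ hρ0 hρ1 rstar ht htK hε)

/-- Every global minimizer of the delay-tolerant problem (38) exhausts the total
channel capacity: Σᵢ r*_{ii} = Σᵢ log(1 + |hᵢ|² p*ᵢ). -/
theorem stmt_16 (K d : ℕ) (hK : 1 ≤ K) (hd : 1 ≤ d)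
    (σ2 ρ : ℝ) (hσ : 0 < σ2) (hρ0 : 0 ≤ ρ) (hρ1 : ρ < 1)
    (h : ℕ → ℝ) (hh : ∀ i, 1 ≤ i → i ≤ K → h i ≠ 0)
    (E : ℕ → ℝ) (hE : ∀ i, 1 ≤ i → i ≤ K → 0 ≤ E i) (hE1 : 0 < E 1)
    (pstar : ℕ → ℝ) (rstar : ℕ → ℕ → ℝ)
    (hfeas : FeasibleDT K d h E pstar rstar)
    (hmin : ∀ (p : ℕ → ℝ) (r : ℕ → ℕ → ℝ), FeasibleDT K d h E p r →
      avgDistDT K σ2 ρ rstar ≤ avgDistDT K σ2 ρ r) :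
    ∑ i ∈ Finset.Icc 1 K, rstar i i
      = ∑ i ∈ Finset.Icc 1 K, Real.log (1 + (h i) ^ 2 * pstar i) :=
  stmt_16_general K d hK hd σ2 ρ hσ hρ0 hρ1 h E pstar rstar hfeas hmin
end
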